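/- Soundness of the rule (¬ιᵗ): if ¬@_j ιx̄ φ is satisfiable in a model M at time t under assignment v, then either M, t, v ⊨ ¬@_j φ[x̄/j], or there exists a time instance t'' ≠ I(j) such that (naming t'' with a fresh nominal i with I(i) = t'') M, t, v ⊨ @_i φ[x̄/i] and M, t, v ⊨ ¬@_j i. -/

import Mathlib

namespace FOHTL

/-- Object-level terms: free individual variables and constants. -/
inductive Trm
  | var : ℕ → Trm
  | const : ℕ → Trm
deriving DecidableEq

/-- Formulas of first-order hybrid tense logic with definite descriptions. -/
inductive Fm
  | bot : Fm
  | pred : ℕ → List Trm → Fm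
  | eq : Trm → Trm → Fm
  | nomf : ℕ → Fm                      -- nominal as formula
  | tvarf : ℕ → Fm                     -- tense variable as formula
  | neg : Fm → Fm
  | conj : Fm → Fm → Fm
  | fut : Fm → Fm                      -- F
  | past : Fm → Fm                     -- P
  | ex : ℕ → Fm → Fm                   -- ∃x φ
  | lam : ℕ → Fm → Trm → Fm            -- (λx ψ)(b)
  | lamDesc : ℕ → Fm → ℕ → Fm → Fm     -- (λx ψ)(ιy φ)
  | tdesc : ℕ → Fm → Fm                -- ιx̄ φ
  | satNom : ℕ → Fm → Fm               -- @_j φ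
  | satTvar : ℕ → Fm → Fm              -- @_x̄ φ
  | satDesc : ℕ → Fm → Fm → Fm         -- @_{ιx̄φ} ψ
  | down : ℕ → Fm → Fm                 -- ↓_x̄ φ

def Fm.or (φ ψ : Fm) : Fm := .neg (.conj (.neg φ) (.neg ψ))

/-- A tense first-order model. -/
structure Model where
  T : Type
  D : Type
  tne : Nonempty T
  dne : Nonempty D
  prec : T → T → Prop
  In : ℕ → T                 -- interpretation of nominals
  Ic : ℕ → D                 -- interpretation of constants
  Ip : ℕ → T → List D → Prop -- interpretation of predicates at time instances

/-- An assignment for individual and tense variables. -/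
structure Asg (M : Model) where
  va : ℕ → M.D
  vt : ℕ → M.T

def Asg.updV {M : Model} (v : Asg M) (x : ℕ) (o : M.D) : Asg M :=
  ⟨fun n => if n = x then o else v.va n, v.vt⟩

def Asg.updT {M : Model} (v : Asg M) (x : ℕ) (s : M.T) : Asg M :=
  ⟨v.va, fun n => if n = x then s else v.vt n⟩

def Model.trmI (M : Model) (v : Asg M) : Trm → M.D
  | .var n => v.va n
  | .const c => M.Ic c

/-- Satisfaction `M, t, v ⊨ φ`. -/
def Sat (M : Model) : Fm → M.T → Asg M → Prop
  | .bot, _, _ => False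
  | .pred P args, t, v => M.Ip P t (args.map (M.trmI v))
  | .eq t1 t2, _, v => M.trmI v t1 = M.trmI v t2
  | .nomf i, t, _ => t = M.In i
  | .tvarf x, t, v => t = v.vt x
  | .neg φ, t, v => ¬ Sat M φ t v
  | .conj φ ψ, t, v => Sat M φ t v ∧ Sat M ψ t v
  | .fut φ, t, v => ∃ s, M.prec t s ∧ Sat M φ s v
  | .past φ, t, v => ∃ s, M.prec s t ∧ Sat M φ s v
  | .ex x φ, t, v => ∃ o, Sat M φ t (v.updV x o)
  | .lam x ψ b, t, v => Sat M ψ t (v.updV x (M.trmI v b))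
  | .lamDesc x ψ y φ, t, v =>
      ∃ o, Sat M φ t (v.updV y o) ∧ Sat M ψ t (v.updV x o) ∧
        ∀ o', Sat M φ t (v.updV y o') → o' = o
  | .tdesc x φ, t, v =>
      Sat M φ t (v.updT x t) ∧ ∀ s, Sat M φ s (v.updT x s) → s = t
  | .satNom i φ, _, v => Sat M φ (M.In i) v
  | .satTvar x φ, _, v => Sat M φ (v.vt x) v
  | .satDesc x φ ψ, _, v =>
      ∃ s, (Sat M φ s (v.updT x s) ∧ ∀ s', Sat M φ s' (v.updT x s') → s' = s) ∧
        Sat M ψ s v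
  | .down x φ, t, v => Sat M φ t (v.updT x t)

def Trm.substV (x : ℕ) (b : Trm) : Trm → Trm
  | .var n => if n = x then b else .var n
  | .const c => .const c

/-- Substitution of the term `b` for the individual variable `x`. -/
def Fm.substV (x : ℕ) (b : Trm) : Fm → Fm
  | .bot => .bot
  | .pred P args => .pred P (args.map (Trm.substV x b))
  | .eq t1 t2 => .eq (t1.substV x b) (t2.substV x b)
  | .nomf i => .nomf i
  | .tvarf y => .tvarf y
  | .neg φ => .neg (φ.substV x b)
  | .conj φ ψ => .conj (φ.substV x b) (ψ.substV x b)
  | .fut φ => .fut (φ.substV x b)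
  | .past φ => .past (φ.substV x b)
  | .ex y φ => .ex y (if y = x then φ else φ.substV x b)
  | .lam y ψ t => .lam y (if y = x then ψ else ψ.substV x b) (t.substV x b)
  | .lamDesc y ψ z φ =>
      .lamDesc y (if y = x then ψ else ψ.substV x b) z (if z = x then φ else φ.substV x b)
  | .tdesc y φ => .tdesc y (φ.substV x b)
  | .satNom i φ => .satNom i (φ.substV x b)
  | .satTvar y φ => .satTvar y (φ.substV x b)
  | .satDesc y φ ψ => .satDesc y (φ.substV x b) (ψ.substV x b)
  | .down y φ => .down y (φ.substV x b)

/-- Substitution of the nominal `i` for the tense variable `x`. -/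
def Fm.substT (x i : ℕ) : Fm → Fm
  | .bot => .bot
  | .pred P args => .pred P args
  | .eq t1 t2 => .eq t1 t2
  | .nomf j => .nomf j
  | .tvarf y => if y = x then .nomf i else .tvarf y
  | .neg φ => .neg (φ.substT x i)
  | .conj φ ψ => .conj (φ.substT x i) (ψ.substT x i)
  | .fut φ => .fut (φ.substT x i)
  | .past φ => .past (φ.substT x i)
  | .ex y φ => .ex y (φ.substT x i)
  | .lam y ψ t => .lam y (ψ.substT x i) t
  | .lamDesc y ψ z φ => .lamDesc y (ψ.substT x i) z (φ.substT x i)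
  | .tdesc y φ => .tdesc y (if y = x then φ else φ.substT x i)
  | .satNom j φ => .satNom j (φ.substT x i)
  | .satTvar y φ =>
      if y = x then .satNom i (φ.substT x i) else .satTvar y (φ.substT x i)
  | .satDesc y φ ψ => .satDesc y (if y = x then φ else φ.substT x i) (ψ.substT x i)
  | .down y φ => .down y (if y = x then φ else φ.substT x i)

/-- Replacement of the nominal `i` by the tense variable `x`. -/
def Fm.substNomT (i x : ℕ) : Fm → Fm
  | .bot => .bot
  | .pred P args => .pred P args
  | .eq t1 t2 => .eq t1 t2
  | .nomf j => if j = i then .tvarf x else .nomf j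
  | .tvarf y => .tvarf y
  | .neg φ => .neg (φ.substNomT i x)
  | .conj φ ψ => .conj (φ.substNomT i x) (ψ.substNomT i x)
  | .fut φ => .fut (φ.substNomT i x)
  | .past φ => .past (φ.substNomT i x)
  | .ex y φ => .ex y (φ.substNomT i x)
  | .lam y ψ t => .lam y (ψ.substNomT i x) t
  | .lamDesc y ψ z φ => .lamDesc y (ψ.substNomT i x) z (φ.substNomT i x)
  | .tdesc y φ => .tdesc y (if y = x then φ else φ.substNomT i x)
  | .satNom j φ =>
      if j = i then .satTvar x (φ.substNomT i x) else .satNom j (φ.substNomT i x)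
  | .satTvar y φ => .satTvar y (φ.substNomT i x)
  | .satDesc y φ ψ => .satDesc y (if y = x then φ else φ.substNomT i x) (ψ.substNomT i x)
  | .down y φ => .down y (if y = x then φ else φ.substNomT i x)

def Trm.vars : Trm → Set ℕ
  | .var n => {n}
  | .const _ => ∅

/-- Free individual variables of a formula. -/
def Fm.freeV : Fm → Set ℕ
  | .bot => ∅
  | .pred _ args => {n | ∃ t ∈ args, n ∈ t.vars}
  | .eq t1 t2 => t1.vars ∪ t2.vars
  | .nomf _ => ∅
  | .tvarf _ => ∅
  | .neg φ => φ.freeV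
  | .conj φ ψ => φ.freeV ∪ ψ.freeV
  | .fut φ => φ.freeV
  | .past φ => φ.freeV
  | .ex y φ => φ.freeV \ {y}
  | .lam y ψ t => (ψ.freeV \ {y}) ∪ t.vars
  | .lamDesc y ψ z φ => (ψ.freeV \ {y}) ∪ (φ.freeV \ {z})
  | .tdesc _ φ => φ.freeV
  | .satNom _ φ => φ.freeV
  | .satTvar _ φ => φ.freeV
  | .satDesc _ φ ψ => φ.freeV ∪ ψ.freeV
  | .down _ φ => φ.freeV

/-- All individual variables occurring in a formula (free or bound). -/
def Fm.varsOcc : Fm → Set ℕ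
  | .bot => ∅
  | .pred _ args => {n | ∃ t ∈ args, n ∈ t.vars}
  | .eq t1 t2 => t1.vars ∪ t2.vars
  | .nomf _ => ∅
  | .tvarf _ => ∅
  | .neg φ => φ.varsOcc
  | .conj φ ψ => φ.varsOcc ∪ ψ.varsOcc
  | .fut φ => φ.varsOcc
  | .past φ => φ.varsOcc
  | .ex y φ => insert y φ.varsOcc
  | .lam y ψ t => insert y (ψ.varsOcc ∪ t.vars)
  | .lamDesc y ψ z φ => insert y (insert z (ψ.varsOcc ∪ φ.varsOcc))
  | .tdesc _ φ => φ.varsOcc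
  | .satNom _ φ => φ.varsOcc
  | .satTvar _ φ => φ.varsOcc
  | .satDesc _ φ ψ => φ.varsOcc ∪ ψ.varsOcc
  | .down _ φ => φ.varsOcc

/-- Free tense variables of a formula. -/
def Fm.freeT : Fm → Set ℕ
  | .bot => ∅
  | .pred _ _ => ∅
  | .eq _ _ => ∅
  | .nomf _ => ∅
  | .tvarf y => {y}
  | .neg φ => φ.freeT
  | .conj φ ψ => φ.freeT ∪ ψ.freeT
  | .fut φ => φ.freeT
  | .past φ => φ.freeT
  | .ex _ φ => φ.freeT
  | .lam _ ψ _ => ψ.freeT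
  | .lamDesc _ ψ _ φ => ψ.freeT ∪ φ.freeT
  | .tdesc y φ => φ.freeT \ {y}
  | .satNom _ φ => φ.freeT
  | .satTvar y φ => insert y φ.freeT
  | .satDesc y φ ψ => (φ.freeT \ {y}) ∪ ψ.freeT
  | .down y φ => φ.freeT \ {y}

/-- Nominals occurring in a formula. -/
def Fm.noms : Fm → Set ℕ
  | .bot => ∅
  | .pred _ _ => ∅
  | .eq _ _ => ∅
  | .nomf j => {j}
  | .tvarf _ => ∅
  | .neg φ => φ.noms
  | .conj φ ψ => φ.noms ∪ ψ.noms
  | .fut φ => φ.noms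
  | .past φ => φ.noms
  | .ex _ φ => φ.noms
  | .lam _ ψ _ => ψ.noms
  | .lamDesc _ ψ _ φ => ψ.noms ∪ φ.noms
  | .tdesc _ φ => φ.noms
  | .satNom j φ => insert j φ.noms
  | .satTvar _ φ => φ.noms
  | .satDesc _ φ ψ => φ.noms ∪ ψ.noms
  | .down _ φ => φ.noms

/-- Update the interpretation of a single nominal. -/
def Model.updNom (M : Model) (i : ℕ) (s : M.T) : Model :=
  { M with In := fun j => if j = i then s else M.In j }

lemma trmI_updT (M : Model) (v : Asg M) (x : ℕ) (s : M.T) :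
    M.trmI (v.updT x s) = M.trmI v := by
  funext tm; cases tm <;> rfl

lemma updT_updT_same (M : Model) (v : Asg M) (x : ℕ) (a b : M.T) :
    (v.updT x a).updT x b = v.updT x b := by
  simp only [Asg.updT]
  congr 1
  funext n
  by_cases h : n = x <;> simp [h]

lemma updT_comm (M : Model) (v : Asg M) {x y : ℕ} (h : x ≠ y) (a b : M.T) :
    (v.updT x a).updT y b = (v.updT y b).updT x a := by
  simp only [Asg.updT]
  congr 1
  funext n
  by_cases h1 : n = x <;> by_cases h2 : n = y <;> simp_all

lemma sat_substT (M : Model) (x i : ℕ) :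
    ∀ (φ : Fm) (t : M.T) (v : Asg M),
      Sat M (φ.substT x i) t v ↔ Sat M φ t (v.updT x (M.In i)) := by
  intro φ
  induction φ with
  | bot => intro t v; simp [Fm.substT, Sat]
  | pred P args => intro t v; simp [Fm.substT, Sat, trmI_updT]
  | eq t1 t2 => intro t v; simp [Fm.substT, Sat, trmI_updT]
  | nomf k => intro t v; simp [Fm.substT, Sat]
  | tvarf y =>
      intro t v
      by_cases h : y = x <;> simp [Fm.substT, Sat, Asg.updT, h]
  | neg φ ih => intro t v; simp [Fm.substT, Sat, ih]
  | conj φ ψ ih1 ih2 => intro t v; simp [Fm.substT, Sat, ih1, ih2]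
  | fut φ ih => intro t v; simp [Fm.substT, Sat, ih]
  | past φ ih => intro t v; simp [Fm.substT, Sat, ih]
  | ex y φ ih =>
      intro t v
      have hc : ∀ (o : M.D), (v.updT x (M.In i)).updV y o = (v.updV y o).updT x (M.In i) := by
        intro o; rfl
      simp [Fm.substT, Sat, ih, hc]
  | lam y ψ b ihψ =>
      intro t v
      have hc : ∀ (o : M.D), (v.updT x (M.In i)).updV y o = (v.updV y o).updT x (M.In i) := by
        intro o; rfl
      have hb : M.trmI (v.updT x (M.In i)) b = M.trmI v b := by
        rw [trmI_updT]
      simp [Fm.substT, Sat, ihψ, hc, hb]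
  | lamDesc y ψ z φ ihψ ihφ =>
      intro t v
      have hc : ∀ (w : ℕ) (o : M.D),
          (v.updT x (M.In i)).updV w o = (v.updV w o).updT x (M.In i) := by
        intro w o; rfl
      simp [Fm.substT, Sat, ihψ, ihφ, hc]
  | tdesc y φ ih =>
      intro t v
      by_cases h : y = x
      · subst h
        simp [Fm.substT, Sat, updT_updT_same]
      · have hne : x ≠ y := fun hh => h hh.symm
        simp [Fm.substT, Sat, h, ih, updT_comm M _ hne]
  | satNom k φ ih => intro t v; simp [Fm.substT, Sat, ih]
  | satTvar y φ ih =>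
      intro t v
      by_cases h : y = x
      · subst h
        simp [Fm.substT, Sat, ih, Asg.updT]
      · simp [Fm.substT, Sat, h, ih, Asg.updT]
  | satDesc y φ ψ ihφ ihψ =>
      intro t v
      by_cases h : y = x
      · subst h
        simp [Fm.substT, Sat, ihψ, updT_updT_same]
      · have hne : x ≠ y := fun hh => h hh.symm
        simp [Fm.substT, Sat, h, ihφ, ihψ, updT_comm M _ hne]
  | down y φ ih =>
      intro t v
      by_cases h : y = x
      · subst h
        simp [Fm.substT, Sat, updT_updT_same]
      · have hne : x ≠ y := fun hh => h hh.symm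
        simp [Fm.substT, Sat, h, ih, updT_comm M _ hne]

lemma sat_updNom (M : Model) (i : ℕ) (s : M.T) :
    ∀ (φ : Fm), i ∉ φ.noms →
      ∀ (t : M.T) (w : Asg (M.updNom i s)),
        Sat (M.updNom i s) φ t w ↔ Sat M φ t ⟨w.va, w.vt⟩ := by
  intro φ
  induction φ with
  | bot => intro _ t w; simp [Sat]
  | pred P args =>
      intro _ t w
      have : (M.updNom i s).trmI w = M.trmI ⟨w.va, w.vt⟩ := by
        funext tm; cases tm <;> rfl
      simp only [Sat, this]
      exact Iff.rfl
  | eq t1 t2 =>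
      intro _ t w
      have : (M.updNom i s).trmI w = M.trmI ⟨w.va, w.vt⟩ := by
        funext tm; cases tm <;> rfl
      simp [Sat, this]
      exact Iff.rfl
  | nomf k =>
      intro hk t w
      have hki : k ≠ i := by
        intro hh; exact hk (by simp [Fm.noms, hh])
      simp [Sat, Model.updNom, hki]
  | tvarf y => intro _ t w; simp [Sat]; exact Iff.rfl
  | neg φ ih => intro h t w; simp [Fm.noms] at h; simp [Sat, ih h]
  | conj φ ψ ih1 ih2 =>
      intro h t w; simp [Fm.noms] at h
      simp [Sat, ih1 h.1, ih2 h.2]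
  | fut φ ih =>
      intro h t w; simp [Fm.noms] at h
      simp only [Sat, Model.updNom]
      constructor
      · rintro ⟨u, hu, hs⟩; exact ⟨u, hu, (ih h _ _).1 hs⟩
      · rintro ⟨u, hu, hs⟩; exact ⟨u, hu, (ih h _ _).2 hs⟩
  | past φ ih =>
      intro h t w; simp [Fm.noms] at h
      simp only [Sat, Model.updNom]
      constructor
      · rintro ⟨u, hu, hs⟩; exact ⟨u, hu, (ih h _ _).1 hs⟩
      · rintro ⟨u, hu, hs⟩; exact ⟨u, hu, (ih h _ _).2 hs⟩
  | ex y φ ih =>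
      intro h t w; simp [Fm.noms] at h
      simp only [Sat]
      constructor
      · rintro ⟨o, ho⟩; exact ⟨o, (ih h _ _).1 ho⟩
      · rintro ⟨o, ho⟩; exact ⟨o, (ih h _ _).2 ho⟩
  | lam y ψ b ihψ =>
      intro h t w; simp [Fm.noms] at h
      have : (M.updNom i s).trmI w b = M.trmI ⟨w.va, w.vt⟩ b := by
        cases b <;> rfl
      simp only [Sat, this]
      exact ihψ h _ _
  | lamDesc y ψ z φ ihψ ihφ =>
      intro h t w; simp [Fm.noms] at h
      simp only [Sat]
      constructor
      · rintro ⟨o, h1, h2, h3⟩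
        exact ⟨o, (ihφ h.2 _ _).1 h1, (ihψ h.1 _ _).1 h2,
          fun o' ho' => h3 o' ((ihφ h.2 _ _).2 ho')⟩
      · rintro ⟨o, h1, h2, h3⟩
        exact ⟨o, (ihφ h.2 _ _).2 h1, (ihψ h.1 _ _).2 h2,
          fun o' ho' => h3 o' ((ihφ h.2 _ _).1 ho')⟩
  | tdesc y φ ih =>
      intro h t w; simp [Fm.noms] at h
      simp only [Sat]
      constructor
      · rintro ⟨h1, h2⟩
        exact ⟨(ih h _ _).1 h1, fun u hu => h2 u ((ih h _ _).2 hu)⟩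
      · rintro ⟨h1, h2⟩
        exact ⟨(ih h _ _).2 h1, fun u hu => h2 u ((ih h _ _).1 hu)⟩
  | satNom k φ ih =>
      intro h t w; simp [Fm.noms] at h
      have hki : k ≠ i := fun hh => h.1 hh.symm
      have hIn : (M.updNom i s).In k = M.In k := by simp [Model.updNom, hki]
      simp only [Sat, hIn]
      exact ih h.2 _ _
  | satTvar y φ ih =>
      intro h t w; simp [Fm.noms] at h
      simp only [Sat]
      exact ih h _ _
  | satDesc y φ ψ ihφ ihψ =>
      intro h t w; simp [Fm.noms] at h
      simp only [Sat]
      constructor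
      · rintro ⟨u, ⟨h1, h2⟩, h3⟩
        exact ⟨u, ⟨(ihφ h.1 _ _).1 h1, fun u' hu' => h2 u' ((ihφ h.1 _ _).2 hu')⟩,
          (ihψ h.2 _ _).1 h3⟩
      · rintro ⟨u, ⟨h1, h2⟩, h3⟩
        exact ⟨u, ⟨(ihφ h.1 _ _).2 h1, fun u' hu' => h2 u' ((ihφ h.1 _ _).1 hu')⟩,
          (ihψ h.2 _ _).2 h3⟩
  | down y φ ih =>
      intro h t w; simp [Fm.noms] at h
      simp only [Sat]
      exact ih h _ _

/-- Soundness of the rule (¬ιᵗ): if `¬@_j ιx̄ φ` is satisfied, then either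
`¬@_j φ[x̄/j]` is satisfied, or there is a time instance `t'' ≠ I(j)` such that,
naming `t''` by any fresh nominal `i` (i.e. setting `I(i) = t''`), both
`@_i φ[x̄/i]` and `¬@_j i` are satisfied. -/
theorem neg_iota_t_sound (j x : ℕ) (φ : Fm)
    (M : Model) (t : M.T) (v : Asg M)
    (h : Sat M (.neg (.satNom j (.tdesc x φ))) t v) :
    Sat M (.neg (.satNom j (φ.substT x j))) t v ∨
      ∃ t'' : M.T, t'' ≠ M.In j ∧
        ∀ i, i ∉ φ.noms → i ≠ j →
          Sat (M.updNom i t'') (.satNom i (φ.substT x i)) t ⟨v.va, v.vt⟩ ∧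
          Sat (M.updNom i t'') (.neg (.satNom j (.nomf i))) t ⟨v.va, v.vt⟩ := by
  simp only [Sat] at h
  by_cases hφ : Sat M φ (M.In j) (v.updT x (M.In j))
  · -- the uniqueness clause must fail
    right
    have : ∃ s, Sat M φ s (v.updT x s) ∧ s ≠ M.In j := by
      by_contra hc
      push_neg at hc
      exact h ⟨hφ, fun s hs => hc s hs⟩
    obtain ⟨t'', ht'', hne⟩ := this
    refine ⟨t'', hne, ?_⟩
    intro i hi hij
    constructor
    · show Sat (M.updNom i t'') (φ.substT x i) ((M.updNom i t'').In i) ⟨v.va, v.vt⟩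
      rw [sat_substT]
      have hIi : (M.updNom i t'').In i = t'' := by simp [Model.updNom]
      rw [hIi]
      rw [sat_updNom M i t'' φ hi]
      exact ht''
    · show ¬ Sat (M.updNom i t'') (.nomf i) ((M.updNom i t'').In j) ⟨v.va, v.vt⟩
      simp only [Sat]
      have hIj : (M.updNom i t'').In j = M.In j := by
        simp [Model.updNom, Ne.symm hij]
      have hIi : (M.updNom i t'').In i = t'' := by simp [Model.updNom]
      rw [hIj, hIi]
      exact fun hh => hne hh.symm
  · left
    simp only [Sat]
    rw [sat_substT]
    exact hφ

end FOHTL
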